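/- arXiv:math/0208118 — 11 statements merged into one kernel-verified Lean document; each statement's English description precedes it below -/
import Mathlib

section
/- Let O be a Dedekind domain that is finite and flat over Z, and let t : O → Z be a nonzero Z-linear map. Then the O-linear map O → Hom_Z(O, Z) sending a ∈ O to the Z-linear map x ↦ t(ax) is injective with finite cokernel. -/
/-!
Flatness makes `O` torsion-free, hence free of finite rank over `ℤ`, and `Hom_ℤ(O, ℤ)` is free of
the same rank. An injective linear map between free `ℤ`-modules of equal finite rank has finite
cokernel. For `a ≠ 0` this applies to multiplication by `a` on the domain `O`, so `aO` has finite
index; a form to `ℤ` killing a subgroup of finite index is zero, so `t(a ·) ≠ 0`. Applied to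
`a ↦ t(a ·)` itself, the same rank argument gives the finite cokernel.
-/

theorem LinearMap.finite_quotient_range_of_injective {M N : Type*} [AddCommGroup M]
    [AddCommGroup N] [Module.Free ℤ M] [Module.Finite ℤ M] [Module.Free ℤ N] [Module.Finite ℤ N]
    (h : Module.finrank ℤ M = Module.finrank ℤ N) {f : M →ₗ[ℤ] N} (hf : Function.Injective f) :
    Finite (N ⧸ LinearMap.range f) :=
  Submodule.finiteQuotientOfFreeOfRankEq _ (by rw [LinearMap.finrank_range_of_inj hf, h])

theorem LinearMap.eq_zero_of_le_ker_of_finite_quotient {M V : Type*} [AddCommGroup M]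
    [AddCommGroup V] [IsAddTorsionFree V] {f : M →ₗ[ℤ] V} {P : Submodule ℤ M}
    [Finite (M ⧸ P)] (hP : P ≤ LinearMap.ker f) : f = 0 := by
  have : Finite (M ⧸ P.toAddSubgroup) := ‹Finite (M ⧸ P)›
  ext x
  have hmem : f (P.toAddSubgroup.index • x) = 0 := hP (P.toAddSubgroup.nsmul_index_mem x)
  rw [map_nsmul] at hmem
  exact (nsmul_right_injective AddSubgroup.index_ne_zero_of_finite).eq_iff.mp
    (hmem.trans (nsmul_zero _).symm)

theorem LinearMap.injective_compr₂_mul {O : Type*} [CommRing O] [IsDomain O]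
    [Module.Free ℤ O] [Module.Finite ℤ O] {t : O →ₗ[ℤ] ℤ} (ht : t ≠ 0) :
    Function.Injective ((LinearMap.mul ℤ O).compr₂ t) := by
  rw [← LinearMap.ker_eq_bot, Submodule.eq_bot_iff]
  intro a ha
  by_contra ha0
  have : Finite (O ⧸ LinearMap.range (LinearMap.mulLeft ℤ a)) :=
    LinearMap.finite_quotient_range_of_injective (f := LinearMap.mulLeft ℤ a) rfl
      fun _ _ => mul_left_cancel₀ ha0
  refine ht (LinearMap.eq_zero_of_le_ker_of_finite_quotient
    (P := LinearMap.range (LinearMap.mulLeft ℤ a)) ?_)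
  rintro _ ⟨x, rfl⟩
  exact LinearMap.congr_fun ha x

theorem stmt1_general
    (O : Type) [CommRing O] [IsDomain O]
    [Module.Finite ℤ O] [Module.Flat ℤ O]
    (t : O →ₗ[ℤ] ℤ) (ht : t ≠ 0) :
    Function.Injective (fun a : O => t.comp (LinearMap.mulLeft ℤ a)) ∧
    ∃ S : AddSubgroup (O →ₗ[ℤ] ℤ),
      (∀ g : O →ₗ[ℤ] ℤ, g ∈ S ↔ ∃ a : O, g = t.comp (LinearMap.mulLeft ℤ a)) ∧
      S.FiniteIndex := by
  set φ := (LinearMap.mul ℤ O).compr₂ t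
  have hinj : Function.Injective φ := LinearMap.injective_compr₂_mul ht
  have : Finite ((O →ₗ[ℤ] ℤ) ⧸ (LinearMap.range φ).toAddSubgroup) :=
    LinearMap.finite_quotient_range_of_injective (Module.finrank_linearMap_self ℤ ℤ O).symm hinj
  refine ⟨hinj, (LinearMap.range φ).toAddSubgroup,
    fun g => ⟨fun ⟨a, ha⟩ => ⟨a, ha.symm⟩, fun ⟨a, ha⟩ => ⟨a, ha.symm⟩⟩,
    AddSubgroup.finiteIndex_of_finite_quotient⟩

/-- Let `O` be a Dedekind domain that is finite and flat over ℤ, and let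
`t : O → ℤ` be a nonzero ℤ-linear map.  Then the `O`-linear map `O → Hom_ℤ(O, ℤ)`
sending `a` to `x ↦ t (a * x)` is injective with finite cokernel. -/
theorem stmt1
    (O : Type) [CommRing O] [IsDomain O] [IsDedekindDomain O]
    [Module.Finite ℤ O] [Module.Flat ℤ O]
    (t : O →ₗ[ℤ] ℤ) (ht : t ≠ 0) :
    Function.Injective (fun a : O => t.comp (LinearMap.mulLeft ℤ a)) ∧
    ∃ S : AddSubgroup (O →ₗ[ℤ] ℤ),
      (∀ g : O →ₗ[ℤ] ℤ, g ∈ S ↔ ∃ a : O, g = t.comp (LinearMap.mulLeft ℤ a)) ∧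
      S.FiniteIndex :=
  stmt1_general O t ht
end

section
/- Let N be a finitely generated abelian group, M a subgroup containing the torsion subgroup N_tors, and p a prime. Suppose x ∈ N does not lie in the image of M ⊗ Z_(p) in N ⊗ Z_(p). Then there is a group homomorphism ψ₀ : N → Z such that ψ₀(x) ∉ ψ₀(M) + p^n Z for all sufficiently large n. -/
/-!
Modulo torsion, `N` is free and Smith normal form gives a basis `(e_j)` of `N / N_tors` in which
the image of `M` is spanned by the `a_i e_{f i}` with `a_i ≠ 0`. If every coordinate functional
`e_j^*` satisfied `e_j^*(M) ⊆ p^v ℤ → p^v ∣ e_j^*(x)` for all `v`, then the coordinates of `x`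
off the range of `f` would vanish and `p^{v_p(a_i)} ∣ x_{f i}`; multiplying `x` by the product of
the prime-to-`p` parts of the `a_i` would then put it into `M`, as `N_tors ⊆ M`. So some coordinate functional
`ψ₀` and some `v` satisfy `ψ₀(M) ⊆ p^v ℤ` and `p^v ∤ ψ₀(x)`, and any `n₀ ≥ v` works.
-/

section Multiplicity

variable {α : Type*} [CommMonoidWithZero α] [IsCancelMulZero α] [WfDvdMonoid α]
  {π : α} (hπ : Prime π)
include hπ

theorem eq_zero_of_forall_pow_dvd {y : α} (h : ∀ v : ℕ, π ^ v ∣ y) : y = 0 := by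
  by_contra hy
  obtain ⟨v, hv⟩ := FiniteMultiplicity.of_prime_left hπ hy
  exact hv (h _)

theorem exists_not_dvd_and_dvd_mul_of_forall_pow_dvd {a y : α} (ha : a ≠ 0)
    (h : ∀ v : ℕ, π ^ v ∣ a → π ^ v ∣ y) : ∃ c, ¬ π ∣ c ∧ a ∣ c * y := by
  obtain ⟨c, hac, hc⟩ := (FiniteMultiplicity.of_prime_left hπ ha).exists_eq_pow_mul_and_not_dvd
  refine ⟨c, hc, ?_⟩
  have hy := h _ (Dvd.intro c hac.symm)
  rw [hac, mul_comm c]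
  exact mul_dvd_mul_right hy c

end Multiplicity

namespace Module.Basis.SmithNormalForm

variable {R F ι : Type*} [CommRing R] [AddCommGroup F] [Module R F] {M : Submodule R F} {n : ℕ}
  (snf : SmithNormalForm M ι n)

theorem a_ne_zero [Nontrivial R] (i : Fin n) : snf.a i ≠ 0 := fun h ↦
  snf.bN.ne_zero i (Subtype.ext (by rw [snf.snf, h, zero_smul, Submodule.coe_zero]))

theorem mem_of_dvd_repr [Fintype ι] {y : F} (h0 : ∀ j ∉ Set.range snf.f, snf.bM.repr y j = 0)
    (hdvd : ∀ i, snf.a i ∣ snf.bM.repr y (snf.f i)) : y ∈ M := by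
  rw [← snf.bM.sum_repr y, ← Fintype.sum_of_injective snf.f snf.f.injective
    (fun i ↦ snf.bM.repr y (snf.f i) • snf.bM (snf.f i)) _ (fun j hj ↦ by simp [h0 j hj])
    fun _ ↦ rfl]
  refine Submodule.sum_mem _ fun i _ ↦ ?_
  obtain ⟨t, ht⟩ := hdvd i
  rw [ht, mul_comm, mul_smul, ← snf.snf]
  exact M.smul_mem _ (snf.bN i).2

end Module.Basis.SmithNormalForm

namespace Submodule

variable {R F : Type*} [CommRing R] [IsDomain R] [IsPrincipalIdealRing R] [AddCommGroup F]
  [Module R F] [Module.Free R F] [Module.Finite R F]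

theorem exists_linearMap_pow_dvd_and_not_pow_dvd (M : Submodule R F) {π : R} (hπ : Prime π)
    {x : F} (hx : ∀ c : R, ¬ π ∣ c → c • x ∉ M) :
    ∃ (ψ : F →ₗ[R] R) (v : ℕ), (∀ m ∈ M, π ^ v ∣ ψ m) ∧ ¬ π ^ v ∣ ψ x := by
  classical
  obtain ⟨n, snf⟩ := M.smithNormalForm (Module.Free.chooseBasis R F)
  by_contra! h
  have hout : ∀ j ∉ Set.range snf.f, snf.bM.repr x j = 0 := fun j hj ↦
    eq_zero_of_forall_pow_dvd hπ fun v ↦ h (snf.bM.coord j) v fun m hm ↦ by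
      simp [snf.repr_eq_zero_of_notMem_range ⟨m, hm⟩ hj]
  have hin : ∀ i v, π ^ v ∣ snf.a i → π ^ v ∣ snf.bM.repr x (snf.f i) := fun i v hv ↦
    h (snf.bM.coord (snf.f i)) v fun m hm ↦ by
      rw [Module.Basis.coord_apply, snf.repr_apply_embedding_eq_repr_smul ⟨m, hm⟩, map_smul,
        Finsupp.smul_apply, smul_eq_mul]
      exact hv.mul_right _
  choose c hc hac using fun i ↦
    exists_not_dvd_and_dvd_mul_of_forall_pow_dvd hπ (snf.a_ne_zero i) (hin i)
  refine hx (∏ i, c i) (fun hdvd ↦ ?_) (snf.mem_of_dvd_repr (fun j hj ↦ ?_) fun i ↦ ?_)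
  · obtain ⟨i, -, hi⟩ := (hπ.dvd_finsetProd_iff _).mp hdvd
    exact hc i hi
  · rw [map_smul, Finsupp.smul_apply, hout j hj, smul_zero]
  · rw [map_smul, Finsupp.smul_apply, smul_eq_mul]
    exact (hac i).trans (mul_dvd_mul_right (Finset.dvd_prod_of_mem _ (Finset.mem_univ i)) _)

end Submodule

theorem Submodule.mkQ_mem_map_mkQ_iff {R F : Type*} [Ring R] [AddCommGroup F] [Module R F]
    {T M : Submodule R F} (hTM : T ≤ M) {y : F} : T.mkQ y ∈ M.map T.mkQ ↔ y ∈ M := by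
  rw [← mem_comap, comap_map_mkQ, sup_eq_right.mpr hTM]

/-- Let `N` be a finitely generated abelian group, `M` a subgroup
containing the torsion subgroup, and `p` a prime.  If `x ∈ N` does not lie in the image
of `M ⊗ ℤ_(p)` in `N ⊗ ℤ_(p)` (since `N_tors ⊆ M`, this means: `c • x ∉ M` for every
integer `c` prime to `p`), then there is a homomorphism `ψ₀ : N → ℤ` such that
`ψ₀ x ∉ ψ₀(M) + pⁿℤ` for all sufficiently large `n`. -/
theorem stmt4
    (N : Type) [AddCommGroup N] [AddGroup.FG N]
    (M : AddSubgroup N)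
    (htors : ∀ y : N, (∃ k : ℤ, k ≠ 0 ∧ k • y = 0) → y ∈ M)
    (p : ℕ) (hp : p.Prime) (x : N)
    (hx : ∀ c : ℤ, ¬ (p : ℤ) ∣ c → c • x ∉ M) :
    ∃ ψ₀ : N →+ ℤ, ∃ n₀ : ℕ, ∀ n ≥ n₀,
      ∀ m ∈ M, ¬ ((p : ℤ) ^ n ∣ ψ₀ x - ψ₀ m) := by
  have : Module.Finite ℤ N := Module.Finite.iff_addGroup_fg.mpr ‹_›
  set T := Submodule.torsion ℤ N
  have hTM : T ≤ AddSubgroup.toIntSubmodule M := fun y hy ↦ by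
    obtain ⟨k, hk⟩ := (Submodule.mem_torsion_iff y).mp hy
    exact htors y ⟨k, nonZeroDivisors.coe_ne_zero k, hk⟩
  obtain ⟨ψ, v, hψM, hψx⟩ :=
    ((AddSubgroup.toIntSubmodule M).map T.mkQ).exists_linearMap_pow_dvd_and_not_pow_dvd
      (Nat.prime_iff_prime_int.mp hp) (x := T.mkQ x) fun c hc hmem ↦
        hx c hc ((Submodule.mkQ_mem_map_mkQ_iff hTM).mp (by rwa [map_zsmul]))
  refine ⟨(ψ ∘ₗ T.mkQ).toAddMonoidHom, v, fun n hn m hm hdvd ↦ hψx ?_⟩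
  have hψm : (p : ℤ) ^ v ∣ ψ (T.mkQ m) := hψM _ (Submodule.mem_map_of_mem hm)
  exact (dvd_sub_left hψm).mp ((pow_dvd_pow _ hn).trans hdvd)
end

section
/- Let O be a commutative, reduced, finite, flat Z-algebra and N a finitely generated O-module. Fix y ∈ N not lying in the Z-torsion submodule of N, and let φ : O → O·y be the O-linear surjection sending 1 to y. Then there exists a positive integer m and an O-linear map ψ : O·y → O such that φ ∘ ψ : O·y → O·y is multiplication by m. -/
/-!
`ℚ ⊗[ℤ] O` is the localization of `O` at the positive integers and is a finite reduced
`ℚ`-algebra, hence a semisimple ring, so the extension of the annihilator `I` of `y` is generated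
by an idempotent `f`. Since `O` is `ℤ`-torsion-free it embeds into `ℚ ⊗[ℤ] O`, so clearing
denominators in `f` and `1 - f` yields a positive integer `m` and `e ∈ O` with `e * I = 0` and
`m - e ∈ I`. Then `a • y ↦ a * e` is a well defined map `ψ`, and
`(a * e) • y = a • m • y` since `(m - e) • y = 0`.
-/

open scoped TensorProduct nonZeroDivisors

theorem Algebra.algebraMapSubmonoid_le_nonZeroDivisors_of_isTorsionFree {R A : Type*}
    [CommRing R] [CommRing A] [Algebra R A] [Module.IsTorsionFree R A] {M : Submonoid R}
    (hM : M ≤ R⁰) : algebraMapSubmonoid A M ≤ A⁰ := by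
  rintro _ ⟨r, hr, rfl⟩
  refine mem_nonZeroDivisors_iff_right.mpr fun x hx => ?_
  refine (isRegular_iff_mem_nonZeroDivisors.mpr (hM hr)).smul_eq_zero_iff_right.mp ?_
  rwa [Algebra.smul_def, mul_comm]

theorem IsLocalization.exists_sub_mem_and_mul_eq_zero_of_isSemisimpleRing {O : Type*}
    [CommRing O] {M : Submonoid O} (hM : M ≤ O⁰) (A : Type*) [CommRing A] [Algebra O A]
    [IsLocalization M A] [IsSemisimpleRing A] (I : Ideal O) :
    ∃ s ∈ M, ∃ e : O, s - e ∈ I ∧ ∀ a ∈ I, e * a = 0 := by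
  obtain ⟨f, hf, hIf⟩ := IsSemisimpleRing.ideal_eq_span_idempotent (I.map (algebraMap O A))
  have hf_mem : f ∈ I.map (algebraMap O A) := hIf ▸ Ideal.mem_span_singleton_self f
  have hann : ∀ a ∈ I, (1 - f) * algebraMap O A a = 0 := by
    intro a ha
    obtain ⟨r, hr⟩ := Ideal.mem_span_singleton'.mp (hIf ▸ Ideal.mem_map_of_mem _ ha)
    rw [← hr]
    linear_combination (-r) * hf.eq
  obtain ⟨⟨b, t⟩, hbt⟩ := (mem_map_algebraMap_iff M A).mp hf_mem
  obtain ⟨⟨c, u⟩, hcu⟩ := surj M (1 - f)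
  have hinj := IsLocalization.injective A hM
  -- `c * t` is the image of `(1 - f) * (t * u)`, and `f * (t * u)` is the image of `b * u ∈ I`.
  refine ⟨t * u, mul_mem t.2 u.2, c * t, ?_, fun a ha => hinj ?_⟩
  · have : (t : O) * u - c * t = b * u := hinj <| by
      simp only [map_mul, map_sub]
      linear_combination algebraMap O A t * hcu + algebraMap O A u * hbt
    exact this ▸ I.mul_mem_right _ b.2
  · simp only [map_mul, map_zero]
    linear_combination -(algebraMap O A t * algebraMap O A a) * hcu +
      algebraMap O A u * algebraMap O A t * hann a ha

theorem Ideal.exists_linearMap_span_singleton_smul_eq {R N : Type*} [CommRing R]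
    [AddCommGroup N] [Module R N] {y : N} {s e : R} (hse : s - e ∈ torsionOf R N y)
    (he : ∀ a ∈ torsionOf R N y, e * a = 0) :
    ∃ ψ : (R ∙ y) →ₗ[R] R, ∀ z, ψ z • y = s • (z : N) := by
  have hle : torsionOf R N y ≤ LinearMap.ker (LinearMap.mulRight R e) := fun a ha => by
    simpa [mul_comm] using he a ha
  refine ⟨(torsionOf R N y).liftQ _ hle ∘ₗ (quotTorsionOfEquivSpanSingleton R N y).symm,
    fun z => ?_⟩
  obtain ⟨a, rfl⟩ := (quotTorsionOfEquivSpanSingleton R N y).surjective.comp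
    (Submodule.Quotient.mk_surjective _) z
  have hey : e • y = s • y := by
    rw [mem_torsionOf_iff, sub_smul, sub_eq_zero] at hse
    exact hse.symm
  rw [Function.comp_apply, LinearMap.comp_apply, LinearEquiv.coe_coe,
    LinearEquiv.symm_apply_apply, Submodule.liftQ_apply, quotTorsionOfEquivSpanSingleton_apply_mk,
    LinearMap.mulRight_apply, Submodule.coe_smul, mul_smul, hey]
  exact smul_comm a s y

section

attribute [local instance] Algebra.TensorProduct.rightAlgebra

theorem isLocalization_rat_tensorProduct (O : Type*) [CommRing O] :
    IsLocalization (Algebra.algebraMapSubmonoid O (Submonoid.pos ℤ)) (ℚ ⊗[ℤ] O) :=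
  (Algebra.isLocalization_iff_isPushout (Submonoid.pos ℤ) (A := ℚ)).mpr inferInstance

theorem exists_natCast_sub_mem_and_mul_eq_zero (O : Type*) [CommRing O] [IsReduced O]
    [Module.Finite ℤ O] [Module.Flat ℤ O] (I : Ideal O) :
    ∃ m : ℕ, 0 < m ∧ ∃ e : O, (m : O) - e ∈ I ∧ ∀ a ∈ I, e * a = 0 := by
  have := isLocalization_rat_tensorProduct O
  have : IsReduced (ℚ ⊗[ℤ] O) :=
    isReduced_localizationPreserves (Algebra.algebraMapSubmonoid O (Submonoid.pos ℤ)) _ ‹_›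
  have : IsArtinianRing (ℚ ⊗[ℤ] O) := IsArtinianRing.of_finite ℚ _
  have : IsSemisimpleRing (ℚ ⊗[ℤ] O) := IsArtinianRing.isSemisimpleRing_of_isReduced _
  have hpos : Submonoid.pos ℤ ≤ ℤ⁰ := fun k hk => mem_nonZeroDivisors_of_ne_zero (ne_of_gt hk)
  obtain ⟨_, ⟨k, hk, rfl⟩, e, hse, he⟩ :=
    IsLocalization.exists_sub_mem_and_mul_eq_zero_of_isSemisimpleRing
      (Algebra.algebraMapSubmonoid_le_nonZeroDivisors_of_isTorsionFree hpos) (ℚ ⊗[ℤ] O) I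
  refine ⟨k.toNat, by simpa using hk, e, ?_, he⟩
  rwa [← Int.cast_natCast, Int.toNat_of_nonneg hk.le, ← eq_intCast (algebraMap ℤ O)]

end

theorem stmt5_general
    (O : Type) [CommRing O] [IsReduced O] [Module.Finite ℤ O] [Module.Flat ℤ O]
    (N : Type) [AddCommGroup N] [Module O N]
    (y : N) :
    ∃ m : ℕ, 0 < m ∧ ∃ ψ : ↥(Submodule.span O {y}) →ₗ[O] O,
      ∀ z : ↥(Submodule.span O {y}), ψ z • y = (m : ℤ) • (z : N) := by
  obtain ⟨m, hm, e, hme, he⟩ := exists_natCast_sub_mem_and_mul_eq_zero O (Ideal.torsionOf O N y)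
  obtain ⟨ψ, hψ⟩ := Ideal.exists_linearMap_span_singleton_smul_eq hme he
  exact ⟨m, hm, ψ, fun z => by rw [hψ, Nat.cast_smul_eq_nsmul, natCast_zsmul]⟩

/-- Let `O` be a commutative, reduced, finite, flat ℤ-algebra and `N` a
finitely generated `O`-module.  Fix `y ∈ N` of infinite additive order, and let
`φ : O → O·y` be the `O`-linear surjection `α ↦ α • y`.  Then there is a positive
integer `m` and an `O`-linear map `ψ : O·y → O` such that `φ ∘ ψ` is multiplication
by `m` on `O·y`. -/
theorem stmt5
    (O : Type) [CommRing O] [IsReduced O] [Module.Finite ℤ O] [Module.Flat ℤ O]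
    (N : Type) [AddCommGroup N] [Module O N] [Module.Finite O N]
    (y : N) (hy : ∀ k : ℤ, k ≠ 0 → k • y ≠ 0) :
    ∃ m : ℕ, 0 < m ∧ ∃ ψ : ↥(Submodule.span O {y}) →ₗ[O] O,
      ∀ z : ↥(Submodule.span O {y}), ψ z • y = (m : ℤ) • (z : N) :=
  stmt5_general O N y
end

section
/- Let O be a commutative, reduced, finite, flat Z-algebra with normalization O~, and let p be a prime. Write the Z-exponent of O~/O as c·p^d with gcd(c,p)=1, let p·O~ = p~_1^{e_1} ⋯ p~_g^{e_g} be the prime factorization, and set p_{i,n} = (p~_i^{e_i n}) ∩ O. Then c^{g-1} p^{d(g-1)} O ⊆ p_{i,n} + ∏_{j≠i} p_{j,n} for every i and every n ≥ 1. -/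
/-!
If `c p^d` kills `Õ/O`, then for comaximal ideals `I, J` of `Õ` with `1 = a + b`, `a ∈ I`,
`b ∈ J`, the elements `c p^d a` and `c p^d b` lie in `O`; hence `c p^d ∈ (I ∩ O) + (J ∩ O)`.
The `g - 1` distinct primes `p̃_j ≠ p̃_i` give `g - 1` such relations, and multiplying them
places `(c p^d)^(g-1)` in `p_{i,n} + ∏_{j ≠ i} p_{j,n}`.
-/

namespace Ideal

theorem prod_sup_le_sup_prod {R ι : Type*} [CommSemiring R] (I : Ideal R) (s : Finset ι)
    (K : ι → Ideal R) : ∏ j ∈ s, (I ⊔ K j) ≤ I ⊔ ∏ j ∈ s, K j := by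
  classical
  induction s using Finset.induction_on with
  | empty => simp
  | insert a s ha ih =>
    rw [Finset.prod_insert ha, Finset.prod_insert ha]
    calc (I ⊔ K a) * ∏ j ∈ s, (I ⊔ K j)
        ≤ (I ⊔ K a) * (I ⊔ ∏ j ∈ s, K j) := mul_mono_right ih
      _ = I * (I ⊔ ∏ j ∈ s, K j) ⊔ K a * I ⊔ K a * ∏ j ∈ s, K j := by
          rw [sup_mul, mul_sup (K a), sup_assoc]
      _ ≤ I ⊔ K a * ∏ j ∈ s, K j :=
          sup_le_sup_right (sup_le Ideal.mul_le_left Ideal.mul_le_right) _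

theorem natCast_mem_comap_sup_comap_of_isCoprime {R S : Type*} [CommRing R] [CommRing S]
    [Algebra R S] {m : ℕ} (hm : ∀ y : S, m • y ∈ (algebraMap R S).range) {I J : Ideal S}
    (hIJ : IsCoprime I J) : (m : R) ∈ I.comap (algebraMap R S) ⊔ J.comap (algebraMap R S) := by
  obtain ⟨a, ha, b, hb, hab⟩ := isCoprime_iff_exists.mp hIJ
  obtain ⟨A, hA⟩ := hm a
  obtain ⟨B, hB⟩ := hm b
  have hA_mem : A ∈ I.comap (algebraMap R S) := by
    rw [mem_comap, hA, nsmul_eq_mul]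
    exact mul_mem_left _ _ ha
  have hB_mem : B ∈ J.comap (algebraMap R S) := by
    rw [mem_comap, hB, nsmul_eq_mul]
    exact mul_mem_left _ _ hb
  -- `A + B - m` lies in the kernel, so in every contracted ideal.
  have hker : A + B - m ∈ I.comap (algebraMap R S) := by
    rw [mem_comap, map_sub, map_add, hA, hB, ← smul_add, hab, map_natCast, nsmul_one, sub_self]
    exact zero_mem _
  have hsplit : (m : R) = A + B - (A + B - m) := by ring
  rw [hsplit]
  exact sub_mem (add_mem (mem_sup_left hA_mem) (mem_sup_right hB_mem)) (mem_sup_left hker)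

end Ideal

theorem stmt6_general
    (O : Type) [CommRing O]
    (h : ℕ) (D : Fin h → Type) [∀ j, CommRing (D j)]
    [Algebra O (∀ j, D j)]
    (p c d : ℕ)
    (hexp : ∀ y : ∀ j, D j, (c * p ^ d : ℕ) • y ∈ (algebraMap O (∀ j, D j)).range)
    (g : ℕ) (P : Fin g → Ideal (∀ j, D j)) (e : Fin g → ℕ)
    (hP : ∀ i, (P i).IsMaximal) (hPne : ∀ i j : Fin g, i ≠ j → P i ≠ P j)
    (i : Fin g) (n : ℕ) :
    Ideal.span {(c : O) ^ (g - 1) * (p : O) ^ (d * (g - 1))} ≤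
      (P i ^ (e i * n)).comap (algebraMap O (∀ j, D j)) +
      ∏ j ∈ Finset.univ.erase i, (P j ^ (e j * n)).comap (algebraMap O (∀ j, D j)) := by
  set Q : Fin g → Ideal O := fun j ↦ (P j ^ (e j * n)).comap (algebraMap O (∀ j, D j))
  have hQ : ∀ j ∈ Finset.univ.erase i, ((c * p ^ d : ℕ) : O) ∈ Q i ⊔ Q j := fun j hj ↦
    Ideal.natCast_mem_comap_sup_comap_of_isCoprime hexp <| IsCoprime.pow <|
      Ideal.isCoprime_iff_sup_eq.mpr <|
        (hP i).coprime_of_ne (hP j) (hPne i j (Finset.ne_of_mem_erase hj).symm)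
  have hpow : (c : O) ^ (g - 1) * (p : O) ^ (d * (g - 1)) =
      ∏ _j ∈ Finset.univ.erase i, ((c * p ^ d : ℕ) : O) := by
    rw [Finset.prod_const, Finset.card_erase_of_mem (Finset.mem_univ i), Finset.card_univ,
      Fintype.card_fin, Nat.cast_mul, Nat.cast_pow, mul_pow, ← pow_mul]
  rw [Ideal.span_singleton_le_iff_mem, hpow, Submodule.add_eq_sup]
  exact Ideal.prod_sup_le_sup_prod _ _ _ (Ideal.prod_mem_prod hQ)

/-- Let `O` be a commutative, reduced, finite, flat ℤ-algebra with
normalization `Õ = ∏ j, D j` (a finite product of Dedekind domains), and `p` a prime.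
Write the ℤ-exponent of `Õ/O` as `c·p^d` with `gcd(c,p) = 1`, let
`p·Õ = P 1 ^ e 1 ⋯ P g ^ e g` be the prime factorization, and set
`p_{i,n} = (P i ^ (e i * n)) ∩ O`.  Then
`c^(g-1) p^(d(g-1)) O ⊆ p_{i,n} + ∏_{j ≠ i} p_{j,n}` for every `i` and every `n ≥ 1`. -/
theorem stmt6
    (O : Type) [CommRing O] [IsReduced O] [Module.Finite ℤ O] [Module.Flat ℤ O]
    (h : ℕ) (D : Fin h → Type) [∀ j, CommRing (D j)] [∀ j, IsDomain (D j)]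
    [∀ j, IsDedekindDomain (D j)]
    [Algebra O (∀ j, D j)]
    (hinj : Function.Injective (algebraMap O (∀ j, D j)))
    [Algebra.IsIntegral O (∀ j, D j)]
    (p c d : ℕ) (hp : p.Prime) (hc : Nat.Coprime c p) (hc0 : 0 < c)
    (hexp : ∀ y : ∀ j, D j, (c * p ^ d : ℕ) • y ∈ (algebraMap O (∀ j, D j)).range)
    (g : ℕ) (P : Fin g → Ideal (∀ j, D j)) (e : Fin g → ℕ)
    (hP : ∀ i, (P i).IsMaximal) (hPne : ∀ i j : Fin g, i ≠ j → P i ≠ P j)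
    (he : ∀ i, 0 < e i)
    (hfact : Ideal.span {((p : ℕ) : ∀ j, D j)} = ∏ i, P i ^ (e i))
    (i : Fin g) (n : ℕ) (hn : 1 ≤ n) :
    Ideal.span {(c : O) ^ (g - 1) * (p : O) ^ (d * (g - 1))} ≤
      (P i ^ (e i * n)).comap (algebraMap O (∀ j, D j)) +
      ∏ j ∈ Finset.univ.erase i, (P j ^ (e j * n)).comap (algebraMap O (∀ j, D j)) :=
  stmt6_general O h D p c d hexp g P e hP hPne i n
end

section
/- With O, O~, p, c, d, p~_i, e_i, and p_{i,n} as above: for all n ≥ d, one has p^n O ⊆ p_{1,n} ∩ ⋯ ∩ p_{g,n} ⊆ p^{n-d} O. -/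
/-!
Since the `P i` are distinct maximal ideals, their powers are pairwise coprime, so
`⋂ᵢ P i ^ (e i * n)` is the product `(∏ᵢ P i ^ e i) ^ n = pⁿ Õ`. Hence the intersection of the
`p_{i,n}` is the contraction `pⁿ Õ ∩ O`, which contains `pⁿ O`. Conversely, if `x = pⁿ z` in `Õ`,
then `c pᵈ z = w ∈ O`, so `c pᵈ x = pⁿ w` in `O`; cancelling `pᵈ` (as `O` is torsion-free) and then
`c` (as it is coprime to `p`) leaves `x ∈ p^(n-d) O`.
-/

theorem Ideal.iInf_pow_mul_eq_span_pow {S ι : Type*} [CommRing S] [Fintype ι]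
    {P : ι → Ideal S} (hP : ∀ i, (P i).IsMaximal) (hPinj : Function.Injective P)
    {e : ι → ℕ} {a : S} (ha : Ideal.span {a} = ∏ i, P i ^ e i) (n : ℕ) :
    ⨅ i, P i ^ (e i * n) = Ideal.span {a ^ n} := by
  have hcop : ((Finset.univ : Finset ι) : Set ι).Pairwise
      (Function.onFun IsCoprime fun i ↦ P i ^ (e i * n)) :=
    fun i _ j _ hij ↦ (Ideal.isCoprime_iff_sup_eq.mpr
      ((hP i).coprime_of_ne (hP j) (hPinj.ne hij))).pow
  calc ⨅ i, P i ^ (e i * n)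
      = ∏ i, P i ^ (e i * n) := by
        simpa using (Ideal.prod_eq_iInf_of_pairwise_isCoprime hcop).symm
    _ = (∏ i, P i ^ e i) ^ n := by simp only [pow_mul, Finset.prod_pow]
    _ = Ideal.span {a ^ n} := by rw [← ha, Ideal.span_singleton_pow]

theorem dvd_of_natCast_pow_dvd_mul {O : Type*} [CommRing O] [IsAddTorsionFree O]
    {p c d n : ℕ} (hp : p ≠ 0) (hc : c.Coprime p) (hn : d ≤ n) {x : O}
    (hx : (p : O) ^ n ∣ (c * p ^ d : ℕ) * x) : (p : O) ^ (n - d) ∣ x := by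
  obtain ⟨w, hw⟩ := hx
  have hcx : (c : O) * x = (p : O) ^ (n - d) * w := by
    refine nsmul_right_injective (pow_ne_zero d hp) ?_
    simp only [nsmul_eq_mul, Nat.cast_pow]
    calc (p : O) ^ d * (c * x) = (c * p ^ d : ℕ) * x := by push_cast; ring
      _ = (p : O) ^ d * ((p : O) ^ (n - d) * w) := by
        rw [hw, ← mul_assoc, ← pow_add, Nat.add_sub_cancel' hn]
  have hcop : IsCoprime ((p : O) ^ (n - d)) (c : O) := by
    simpa only [map_natCast] using (hc.symm.isCoprime.map (Int.castRingHom O)).pow_left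
  exact hcop.dvd_of_dvd_mul_left ⟨w, hcx⟩

theorem Ideal.comap_span_natCast_pow_le {O A : Type*} [CommRing O] [IsAddTorsionFree O]
    [CommRing A] [Algebra O A] (hinj : Function.Injective (algebraMap O A))
    {p c d n : ℕ} (hp : p ≠ 0) (hc : c.Coprime p) (hn : d ≤ n)
    (hexp : ∀ y : A, (c * p ^ d : ℕ) • y ∈ (algebraMap O A).range) :
    (Ideal.span {(p : A) ^ n}).comap (algebraMap O A) ≤ Ideal.span {(p : O) ^ (n - d)} := by
  intro x hx
  obtain ⟨z, hz⟩ := Ideal.mem_span_singleton'.mp (Ideal.mem_comap.mp hx)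
  obtain ⟨w, hw⟩ := hexp z
  have hxw : (c * p ^ d : ℕ) * x = (p : O) ^ n * w := hinj <| by
    rw [map_mul, map_mul, map_natCast, map_pow, map_natCast, hw, ← hz, nsmul_eq_mul]
    ring
  exact Ideal.mem_span_singleton.mpr (dvd_of_natCast_pow_dvd_mul hp hc hn ⟨w, hxw⟩)

theorem stmt7_general
    (O : Type) [CommRing O] [Module.Flat ℤ O]
    (h : ℕ) (D : Fin h → Type) [∀ j, CommRing (D j)]
    [Algebra O (∀ j, D j)]
    (hinj : Function.Injective (algebraMap O (∀ j, D j)))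
    (p c d : ℕ) (hp : p.Prime) (hc : Nat.Coprime c p)
    (hexp : ∀ y : ∀ j, D j, (c * p ^ d : ℕ) • y ∈ (algebraMap O (∀ j, D j)).range)
    (g : ℕ) (P : Fin g → Ideal (∀ j, D j)) (e : Fin g → ℕ)
    (hP : ∀ i, (P i).IsMaximal) (hPne : ∀ i j : Fin g, i ≠ j → P i ≠ P j)
    (hfact : Ideal.span {((p : ℕ) : ∀ j, D j)} = ∏ i, P i ^ (e i))
    (n : ℕ) (hn : d ≤ n) :
    Ideal.span {(p : O) ^ n} ≤
        (⨅ i : Fin g, (P i ^ (e i * n)).comap (algebraMap O (∀ j, D j))) ∧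
    (⨅ i : Fin g, (P i ^ (e i * n)).comap (algebraMap O (∀ j, D j))) ≤
        Ideal.span {(p : O) ^ (n - d)} := by
  have : IsAddTorsionFree O := Module.isTorsionFree_int_iff_isAddTorsionFree.mp inferInstance
  have hPinj : Function.Injective P := fun i j hij ↦ by_contra fun hne ↦ hPne i j hne hij
  rw [← Ideal.comap_iInf, Ideal.iInf_pow_mul_eq_span_pow hP hPinj hfact n]
  refine ⟨?_, Ideal.comap_span_natCast_pow_le hinj hp.ne_zero hc hn hexp⟩
  rw [Ideal.span_singleton_le_iff_mem, Ideal.mem_comap, map_pow, map_natCast]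
  exact Ideal.mem_span_singleton_self _

/-- With `O`, its normalization `Õ = ∏ j, D j`, `p`, `c`, `d`, the primes
`P i` with ramification indices `e i`, and `p_{i,n} = (P i ^ (e i * n)) ∩ O` as in the
paper: for all `n ≥ d`, one has `pⁿO ⊆ p_{1,n} ∩ ⋯ ∩ p_{g,n} ⊆ p^(n-d) O`. -/
theorem stmt7
    (O : Type) [CommRing O] [IsReduced O] [Module.Finite ℤ O] [Module.Flat ℤ O]
    (h : ℕ) (D : Fin h → Type) [∀ j, CommRing (D j)] [∀ j, IsDomain (D j)]
    [∀ j, IsDedekindDomain (D j)]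
    [Algebra O (∀ j, D j)]
    (hinj : Function.Injective (algebraMap O (∀ j, D j)))
    [Algebra.IsIntegral O (∀ j, D j)]
    (p c d : ℕ) (hp : p.Prime) (hc : Nat.Coprime c p) (hc0 : 0 < c)
    (hexp : ∀ y : ∀ j, D j, (c * p ^ d : ℕ) • y ∈ (algebraMap O (∀ j, D j)).range)
    (g : ℕ) (P : Fin g → Ideal (∀ j, D j)) (e : Fin g → ℕ)
    (hP : ∀ i, (P i).IsMaximal) (hPne : ∀ i j : Fin g, i ≠ j → P i ≠ P j)
    (he : ∀ i, 0 < e i)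
    (hfact : Ideal.span {((p : ℕ) : ∀ j, D j)} = ∏ i, P i ^ (e i))
    (n : ℕ) (hn : d ≤ n) :
    Ideal.span {(p : O) ^ n} ≤
        (⨅ i : Fin g, (P i ^ (e i * n)).comap (algebraMap O (∀ j, D j))) ∧
    (⨅ i : Fin g, (P i ^ (e i * n)).comap (algebraMap O (∀ j, D j))) ≤
        Ideal.span {(p : O) ^ (n - d)} :=
  stmt7_general O h D hinj p c d hp hc hexp g P e hP hPne hfact n hn
end

section
/- With O, O~, p, c, d, p~_i, e_i, and p_{i,n} as above: for all n ≥ d, one has c^{dg} p^{n+dg} O ⊆ p_{1,n} ⋯ p_{g,n} ⊆ p^{n-d} O. -/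
/-!
Put `τ = c p^d`, so that `τ Õ ⊆ O`. If `I, J` are coprime ideals of `Õ` and `x ∈ O` lies in `IJ`,
write `1 = a + b` with `a ∈ I`, `b ∈ J`; then `τ a, τ b ∈ O` and `τ x = (τ a) x + x (τ b)` lies in
`(I ∩ O)(J ∩ O)`. Applying this `g` times to `p^n`, which generates `∏ p̃_i^(e_i n)`, puts
`τ^g p^n` in `p_{1,n} ⋯ p_{g,n}`; the spare factor `c^g` is cancelled because `c` is a unit modulo
`p^(ng) ∈ p_{1,n} ⋯ p_{g,n}`. Conversely, an element `x` of the product lies in `p^n Õ`, say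
`x = p^n y`, so `c x = p^(n-d) (τ y)` with `τ y ∈ O`, and `c` is a unit modulo `p^(n-d)`.
-/

namespace Ideal

variable {R S : Type*} [CommRing R] [CommRing S]

theorem prod_comap_le_comap_prod {ι : Type*} (f : R →+* S) (s : Finset ι) (I : ι → Ideal S) :
    ∏ i ∈ s, (I i).comap f ≤ (∏ i ∈ s, I i).comap f := by
  rw [← map_le_iff_le_comap]
  change mapHom f _ ≤ _
  rw [map_prod]
  exact Finset.prod_le_prod' fun i _ => map_comap_le

theorem mem_of_natCast_mul_mem {I : Ideal R} {c m : ℕ} (hcm : c.Coprime m) (hm : (m : R) ∈ I)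
    {y : R} (hy : (c : R) * y ∈ I) : y ∈ I := by
  obtain ⟨a, b, hab⟩ := Nat.isCoprime_iff_coprime.mpr hcm
  have hab : (a : R) * c + b * m = 1 := by exact_mod_cast congrArg (Int.cast : ℤ → R) hab
  have hy' : y = a * (c * y) + b * y * m := by linear_combination (-y) * hab
  rw [hy']
  exact add_mem (I.mul_mem_left _ hy) (I.mul_mem_left _ hm)

section Conductor

variable {f : R →+* S} (hf : Function.Injective f) {τ : R} (hτ : ∀ y, f τ * y ∈ f.range)
include hf hτ

theorem span_singleton_mul_comap_mul_le {I J : Ideal S} (hIJ : IsCoprime I J) :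
    span {τ} * (I * J).comap f ≤ I.comap f * J.comap f := by
  rw [span_singleton_mul_le_iff]
  intro x hx
  have hone : (1 : S) ∈ I ⊔ J := by rw [isCoprime_iff_sup_eq.mp hIJ]; exact Submodule.mem_top
  obtain ⟨a, ha, b, hb, hab⟩ := Submodule.mem_sup.mp hone
  obtain ⟨u, hu⟩ := hτ a
  obtain ⟨v, hv⟩ := hτ b
  have huI : u ∈ I.comap f := by rw [mem_comap, hu]; exact I.mul_mem_left _ ha
  have hvJ : v ∈ J.comap f := by rw [mem_comap, hv]; exact J.mul_mem_left _ hb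
  have hτx : τ * x = u * x + x * v := by
    apply hf
    simp only [map_add, map_mul, hu, hv]
    linear_combination (-(f τ * f x)) * hab
  rw [hτx]
  have hxI : x ∈ I.comap f := comap_mono mul_le_left hx
  have hxJ : x ∈ J.comap f := comap_mono mul_le_right hx
  exact add_mem (mul_mem_mul huI hxJ) (mul_mem_mul hxI hvJ)

theorem span_singleton_pow_mul_comap_prod_le {ι : Type*} (s : Finset ι) (I : ι → Ideal S)
    (hI : (s : Set ι).Pairwise fun i j => IsCoprime (I i) (I j)) :
    span {τ ^ s.card} * (∏ i ∈ s, I i).comap f ≤ ∏ i ∈ s, (I i).comap f := by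
  classical
  induction s using Finset.induction_on with
  | empty => simp
  | @insert j s hj ih =>
    rw [Finset.coe_insert, Set.pairwise_insert] at hI
    have hcop : IsCoprime (I j) (∏ i ∈ s, I i) :=
      IsCoprime.prod_right fun i hi => (hI.2 i hi (ne_of_mem_of_not_mem hi hj).symm).1
    rw [Finset.card_insert_of_notMem hj, Finset.prod_insert hj, Finset.prod_insert hj, pow_succ,
      ← span_singleton_mul_span_singleton, mul_assoc]
    calc span {τ ^ s.card} * (span {τ} * (I j * ∏ i ∈ s, I i).comap f)
        ≤ span {τ ^ s.card} * ((I j).comap f * (∏ i ∈ s, I i).comap f) :=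
          mul_mono_right (span_singleton_mul_comap_mul_le hf hτ hcop)
      _ = (I j).comap f * (span {τ ^ s.card} * (∏ i ∈ s, I i).comap f) := mul_left_comm ..
      _ ≤ (I j).comap f * ∏ i ∈ s, (I i).comap f := mul_mono_right (ih hI.1)

end Conductor

theorem mul_mem_span_singleton_of_map_mem {f : R →+* S} (hf : Function.Injective f)
    {t b : R} (hτ : ∀ y, f (t * b) * y ∈ f.range) {a x : R} (hx : f x ∈ span {f (a * b)}) :
    t * x ∈ span {a} := by
  obtain ⟨y, hy⟩ := mem_span_singleton'.mp hx
  obtain ⟨z, hz⟩ := hτ y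
  have htx : t * x = z * a := hf <| by
    simp only [map_mul] at hy hz ⊢
    rw [hz, ← hy]
    ring
  exact mem_span_singleton'.mpr ⟨z, htx.symm⟩

end Ideal

theorem stmt8_general
    (O : Type) [CommRing O]
    (h : ℕ) (D : Fin h → Type) [∀ j, CommRing (D j)]
    [Algebra O (∀ j, D j)]
    (hinj : Function.Injective (algebraMap O (∀ j, D j)))
    (p c d : ℕ) (hc : Nat.Coprime c p)
    (hexp : ∀ y : ∀ j, D j, (c * p ^ d : ℕ) • y ∈ (algebraMap O (∀ j, D j)).range)
    (g : ℕ) (P : Fin g → Ideal (∀ j, D j)) (e : Fin g → ℕ)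
    (hP : ∀ i, (P i).IsMaximal) (hPne : ∀ i j : Fin g, i ≠ j → P i ≠ P j)
    (hfact : Ideal.span {((p : ℕ) : ∀ j, D j)} = ∏ i, P i ^ (e i))
    (n : ℕ) (hn : d ≤ n) :
    Ideal.span {(c : O) ^ (d * g) * (p : O) ^ (n + d * g)} ≤
        (∏ i : Fin g, (P i ^ (e i * n)).comap (algebraMap O (∀ j, D j))) ∧
    (∏ i : Fin g, (P i ^ (e i * n)).comap (algebraMap O (∀ j, D j))) ≤
        Ideal.span {(p : O) ^ (n - d)} := by
  set f := algebraMap O (∀ j, D j)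
  have hτ : ∀ y, f ((c : O) * (p : O) ^ d) * y ∈ f.range := fun y => by
    simpa [nsmul_eq_mul] using hexp y
  have hprod : ∏ i, P i ^ (e i * n) = Ideal.span {f ((p : O) ^ n)} := by
    simp_rw [pow_mul, Finset.prod_pow, ← hfact, Ideal.span_singleton_pow, map_pow, map_natCast]
  have hcop : Pairwise fun i j => IsCoprime (P i ^ (e i * n)) (P j ^ (e j * n)) :=
    fun i j hij => (Ideal.isCoprime_iff_sup_eq.mpr ((hP i).coprime_of_ne (hP j) (hPne i j hij))).pow
  have hpn : f ((p : O) ^ n) ∈ ∏ i, P i ^ (e i * n) := hprod ▸ Ideal.mem_span_singleton_self _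
  set I := ∏ i, (P i ^ (e i * n)).comap f
  constructor
  · have hpng : ((p ^ (n * g) : ℕ) : O) ∈ I := by
      rw [Nat.cast_pow, pow_mul, ← Fintype.card_fin g, ← Finset.card_univ, ← Finset.prod_const]
      exact Ideal.prod_mem_prod fun i _ =>
        Ideal.prod_le_inf.trans (Finset.inf_le (Finset.mem_univ i)) hpn
    have hτp : ((c : O) * (p : O) ^ d) ^ g * (p : O) ^ n ∈ I := by
      simpa using Ideal.span_singleton_pow_mul_comap_prod_le hinj hτ _ _ (hcop.set_pairwise _)
        (Ideal.mul_mem_mul (Ideal.mem_span_singleton_self _) hpn)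
    rw [Ideal.span_le, Set.singleton_subset_iff]
    refine Ideal.mem_of_natCast_mul_mem (Nat.Coprime.pow g (n * g) hc) hpng ?_
    convert I.mul_mem_left ((c : O) ^ (d * g)) hτp using 1
    push_cast
    ring
  · intro x hx
    have hfx : f x ∈ Ideal.span {f ((p : O) ^ (n - d) * (p : O) ^ d)} := by
      rw [← pow_add, Nat.sub_add_cancel hn, ← hprod]
      exact Ideal.prod_comap_le_comap_prod f _ _ hx
    refine Ideal.mem_of_natCast_mul_mem (Nat.Coprime.pow_right (n - d) hc) ?_
      (Ideal.mul_mem_span_singleton_of_map_mem hinj hτ hfx)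
    rw [Nat.cast_pow]
    exact Ideal.mem_span_singleton_self _

/-- With `O`, its normalization `Õ = ∏ j, D j`, `p`, `c`, `d`, the primes
`P i` with ramification indices `e i`, and `p_{i,n} = (P i ^ (e i * n)) ∩ O` as in the
paper: for all `n ≥ d`, one has `c^(dg) p^(n+dg) O ⊆ p_{1,n} ⋯ p_{g,n} ⊆ p^(n-d) O`,
where the product in the middle is the ideal product in `O`. -/
theorem stmt8
    (O : Type) [CommRing O] [IsReduced O] [Module.Finite ℤ O] [Module.Flat ℤ O]
    (h : ℕ) (D : Fin h → Type) [∀ j, CommRing (D j)] [∀ j, IsDomain (D j)]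
    [∀ j, IsDedekindDomain (D j)]
    [Algebra O (∀ j, D j)]
    (hinj : Function.Injective (algebraMap O (∀ j, D j)))
    [Algebra.IsIntegral O (∀ j, D j)]
    (p c d : ℕ) (hp : p.Prime) (hc : Nat.Coprime c p) (hc0 : 0 < c)
    (hexp : ∀ y : ∀ j, D j, (c * p ^ d : ℕ) • y ∈ (algebraMap O (∀ j, D j)).range)
    (g : ℕ) (P : Fin g → Ideal (∀ j, D j)) (e : Fin g → ℕ)
    (hP : ∀ i, (P i).IsMaximal) (hPne : ∀ i j : Fin g, i ≠ j → P i ≠ P j)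
    (he : ∀ i, 0 < e i)
    (hfact : Ideal.span {((p : ℕ) : ∀ j, D j)} = ∏ i, P i ^ (e i))
    (n : ℕ) (hn : d ≤ n) :
    Ideal.span {(c : O) ^ (d * g) * (p : O) ^ (n + d * g)} ≤
        (∏ i : Fin g, (P i ^ (e i * n)).comap (algebraMap O (∀ j, D j))) ∧
    (∏ i : Fin g, (P i ^ (e i * n)).comap (algebraMap O (∀ j, D j))) ≤
        Ideal.span {(p : O) ^ (n - d)} :=
  stmt8_general O h D hinj p c d hc hexp g P e hP hPne hfact n hn
end

section
/- Let O be a complete local ring obtained as the p-adic situation above: O a one-dimensional local domain whose normalization O~ is a complete discrete valuation ring with maximal ideal p~ satisfying p~^e = p O~, and such that p^d (O~/O) = 0. Set p_n = p~^{e n} ∩ O. Let N be a finitely generated O-module, α ∈ O with α ∉ p_a, and x ∈ N with x ∉ p_b N, and assume N[p^{a+d}] ⊆ p^b N. Then αx ∉ p^{a+b+d} N. -/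
/-- (Completed local version of the key lemma.)  Let `O` be a
one-dimensional local domain whose normalization `Õ` is a complete discrete valuation
ring with maximal ideal `p~` satisfying `p~^e = p Ot`, and such that `p^d (Ot/O) = 0`.
Set `p_n = p~^(e n) ∩ O`.  Let `N` be a finitely generated `O`-module, `α ∈ O` with
`α ∉ p_a`, and `x ∈ N` with `x ∉ p_b N`, and assume `N[p^(a+d)] ⊆ p^b N`.  Then
`α x ∉ p^(a+b+d) N`. -/
theorem stmt10
    (O : Type) [CommRing O] [IsDomain O] [IsLocalRing O]
    (hdim : ringKrullDim O = 1)
    (Ot : Type) [CommRing Ot] [IsDomain Ot] [IsDiscreteValuationRing Ot]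
    [IsAdicComplete (IsLocalRing.maximalIdeal Ot) Ot]
    [Algebra O Ot] (hinj : Function.Injective (algebraMap O Ot))
    [Algebra.IsIntegral O Ot]
    (p e d : ℕ) (hp : p.Prime) (he : 0 < e)
    (hme : (IsLocalRing.maximalIdeal Ot) ^ e = Ideal.span {((p : ℕ) : Ot)})
    (hexp : ∀ y : Ot, (p : ℕ) ^ d • y ∈ (algebraMap O Ot).range)
    (N : Type) [AddCommGroup N] [Module O N] [Module.Finite O N]
    (α : O) (x : N) (a b : ℕ)
    (hα : α ∉ ((IsLocalRing.maximalIdeal Ot) ^ (e * a)).comap (algebraMap O Ot))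
    (hx : x ∉ (((IsLocalRing.maximalIdeal Ot) ^ (e * b)).comap (algebraMap O Ot)) •
        (⊤ : Submodule O N))
    (htors : ∀ y : N, (p : ℕ) ^ (a + d) • y = 0 → ∃ z : N, y = (p : ℕ) ^ b • z) :
    ¬ ∃ z : N, α • x = (p : ℕ) ^ (a + b + d) • z := by
  set K := algebraMap O Ot with hK
  have hpow : ∀ n : ℕ, (IsLocalRing.maximalIdeal Ot) ^ (e * n)
      = Ideal.span {((p : Ot)) ^ n} := by
    intro n
    rw [pow_mul, hme, Ideal.span_singleton_pow]
  -- α divides p^a in Ot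
  have hdvd : K α ∣ (p : Ot) ^ a := by
    rcases ValuationRing.dvd_total (K α) ((p : Ot) ^ a) with h | h
    · exact h
    · exact absurd (by
        show K α ∈ (IsLocalRing.maximalIdeal Ot) ^ (e * a)
        rw [hpow a]
        exact Ideal.mem_span_singleton.mpr h) hα
  obtain ⟨β, hβ⟩ := hdvd
  obtain ⟨γ, hγ⟩ := hexp β
  -- key identity in O : α * γ = p ^ (a + d)
  have hkey : α * γ = (p : O) ^ (a + d) := by
    apply hinj
    have : ((p : ℕ) ^ d • β : Ot) = (p : Ot) ^ d * β := by
      simp [nsmul_eq_mul]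
    rw [map_mul, hγ, this, map_pow, map_natCast, pow_add, hβ]
    ring
  rintro ⟨z, hz⟩
  -- convert ℕ-smuls to O-smuls
  have hsm : ∀ (n : ℕ) (y : N), (p : ℕ) ^ n • y = ((p : O) ^ n) • y := by
    intro n y
    rw [← Nat.cast_smul_eq_nsmul O ((p : ℕ) ^ n) y]
    norm_cast
  have hz' : α • x = ((p : O) ^ (a + b + d)) • z := by rw [← hsm]; exact hz
  have h1 : ((p : O) ^ (a + d)) • (x - (p : O) ^ b • γ • z) = 0 := by
    have := congrArg (γ • ·) hz'
    simp only [smul_smul] at this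
    rw [mul_comm γ α, hkey] at this
    rw [smul_sub, smul_smul, smul_smul, this, sub_eq_zero]
    congr 1
    ring
  obtain ⟨w, hw⟩ := htors _ (by rw [hsm]; exact h1)
  have hxmem : x = ((p : O) ^ b) • (γ • z + w) := by
    rw [hsm] at hw
    have := sub_eq_iff_eq_add.mp hw
    rw [this, smul_add, add_comm]
  apply hx
  rw [hxmem]
  refine Submodule.smul_mem_smul ?_ trivial
  show K ((p : O) ^ b) ∈ (IsLocalRing.maximalIdeal Ot) ^ (e * b)
  rw [hpow b, map_pow, map_natCast]
  exact Ideal.mem_span_singleton.mpr dvd_rfl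
end

section
/- Let O be a commutative, reduced, finite, flat Z-algebra with notation c, d, p_{i,n} as above, and let A be an O-module. Define φ_n : A[p^{n-d}] → A[p_{1,n}] ⊕ ⋯ ⊕ A[p_{g,n}] by t ↦ (b_{1,n}t, ..., b_{g,n}t), where a_{i,n} ∈ p_{i,n} and b_{i,n} ∈ ∏_{j≠i} p_{j,n} satisfy a_{i,n} + b_{i,n} = c^{g-1} p^{d(g-1)}. Define ψ_n : A[p_{1,n}] ⊕ ⋯ ⊕ A[p_{g,n}] → A[p^{n-d}] by (t_1,...,t_g) ↦ p^d(t_1 + ⋯ + t_g). Then φ_n ∘ ψ_n is multiplication by c^{g-1} p^{dg} on A[p_{1,n}] ⊕ ⋯ ⊕ A[p_{g,n}]. -/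
/-- With `O` a commutative reduced finite flat ℤ-algebra, normalization
`Õ = ∏ j, D j`, `p`, `c`, `d`, primes `P i`, ramification indices `e i`, and
`p_{i,n} = (P i ^ (e i * n)) ∩ O` as in the paper: let `A` be an `O`-module, and let
`b i ∈ ∏_{j ≠ i} p_{j,n}` satisfy `a i + b i = c^(g-1) p^(d(g-1))` for some
`a i ∈ p_{i,n}`.  Define `φ_n(t) = (b 1 • t, …, b g • t)` on `A[p^(n-d)]` and
`ψ_n(t 1, …, t g) = p^d • (t 1 + ⋯ + t g)`.  Then `φ_n ∘ ψ_n` is multiplication by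
`c^(g-1) p^(dg)` on `A[p_{1,n}] ⊕ ⋯ ⊕ A[p_{g,n}]`. -/
theorem stmt12
    (O : Type) [CommRing O] [IsReduced O] [Module.Finite ℤ O] [Module.Flat ℤ O]
    (h : ℕ) (D : Fin h → Type) [∀ j, CommRing (D j)] [∀ j, IsDomain (D j)]
    [∀ j, IsDedekindDomain (D j)]
    [Algebra O (∀ j, D j)]
    (hinj : Function.Injective (algebraMap O (∀ j, D j)))
    [Algebra.IsIntegral O (∀ j, D j)]
    (p c d : ℕ) (hp : p.Prime) (hc : Nat.Coprime c p) (hc0 : 0 < c)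
    (hexp : ∀ y : ∀ j, D j, (c * p ^ d : ℕ) • y ∈ (algebraMap O (∀ j, D j)).range)
    (g : ℕ) (P : Fin g → Ideal (∀ j, D j)) (e : Fin g → ℕ)
    (hP : ∀ i, (P i).IsMaximal) (hPne : ∀ i j : Fin g, i ≠ j → P i ≠ P j)
    (he : ∀ i, 0 < e i)
    (hfact : Ideal.span {((p : ℕ) : ∀ j, D j)} = ∏ i, P i ^ (e i))
    (n : ℕ) (hn : d ≤ n) (b : Fin g → O)
    (hb : ∀ i, b i ∈ ∏ j ∈ Finset.univ.erase i,
        (P j ^ (e j * n)).comap (algebraMap O (∀ j, D j)))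
    (hab : ∀ i, (c : O) ^ (g - 1) * (p : O) ^ (d * (g - 1)) - b i ∈
        (P i ^ (e i * n)).comap (algebraMap O (∀ j, D j)))
    (A : Type) [AddCommGroup A] [Module O A] :
    ∀ t : Fin g → A,
      (∀ i, ∀ r ∈ (P i ^ (e i * n)).comap (algebraMap O (∀ j, D j)), r • t i = 0) →
      ∀ j, b j • ((p : O) ^ d • ∑ i, t i) =
        ((c : O) ^ (g - 1) * (p : O) ^ (d * g)) • t j := by
  intro t ht j
  have hg : 0 < g := j.pos
  have h1 : ∀ i, i ≠ j → b j • t i = 0 := by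
    intro i hij
    apply ht i
    have hle := Ideal.prod_le_inf (s := Finset.univ.erase j)
      (f := fun k => (P k ^ (e k * n)).comap (algebraMap O (∀ j, D j)))
    exact (le_trans hle (Finset.inf_le (by simp [Finset.mem_erase, hij]))) (hb j)
  have h2 : b j • t j = ((c : O) ^ (g - 1) * (p : O) ^ (d * (g - 1))) • t j := by
    have := ht j _ (hab j)
    rw [sub_smul, sub_eq_zero] at this
    exact this.symm
  rw [smul_comm, Finset.smul_sum]
  rw [Finset.sum_eq_single j (fun i _ hij => h1 i hij) (by simp)]
  rw [h2, smul_smul]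
  congr 1
  have hgg : d * g = d + d * (g - 1) := by
    conv_lhs => rw [← Nat.succ_pred_eq_of_pos hg]
    rw [Nat.mul_succ, Nat.pred_eq_sub_one]; ring
  rw [hgg, pow_add]
  ring
end

section
/- Let A be an abelian variety over a number field F with endomorphism ring O = End_F(A), α ∈ O, and x ∈ A(F). Let w be a finite place of F_α = F(A[α]), prime to α, at which A has good reduction, and let red_w : A(F_α) → A(k_w) be reduction. Let x/α ∈ A(F̄) be a fixed α-th root of x and Frob_w the Frobenius at w in Gal(F_α(x/α)/F_α). Then red_w(x) ∈ α A(k_w) if and only if Frob_w(x/α) = x/α, i.e., the Kummer cocycle λ_α^{O·x}(Frob_w) vanishes. -/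
/-- (Lemma on Frobenius and reduction.)  Abstract model: `O = End_F A`,
`Λ = A(F_α(x/α))`, `Dw = A(k_{w'})` the points over the residue field of a place `w'` of
`F_α(x/α)` above `w`, `red : Λ → Dw` the (O-equivariant) reduction map, `τ` the Frobenius
at `w'` acting on `Λ` and `σ` the Frobenius acting on `Dw`, compatibly with `red`.  The
`α`-torsion of `Λ` is rational over `F_α` (fixed by `τ`), reduction is injective on it
(good reduction, `w` prime to `α`), and it reduces onto the `α`-torsion of `Dw`
(`A[α] ⊆ A(k_w)`).  Given `x ∈ A(F)` (so `τ x = x`) and an `α`-th root `z = x/α ∈ Λ`,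
then `red x ∈ α A(k_w)` — where `A(k_w)` is the fixed subgroup of `σ` — if and only if
`Frob_w (x/α) = x/α`, i.e. the Kummer cocycle `λ_α^{O·x}(Frob_w)` vanishes. -/
theorem stmt13
    (O : Type) [Ring O]
    (Λ Dw : Type) [AddCommGroup Λ] [Module O Λ] [AddCommGroup Dw] [Module O Dw]
    (α : O) (red : Λ →ₗ[O] Dw) (τ : Λ →ₗ[O] Λ) (σ : Dw →ₗ[O] Dw)
    (hcomm : ∀ u : Λ, red (τ u) = σ (red u))
    (hτtors : ∀ t : Λ, α • t = 0 → τ t = t)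
    (hinj : ∀ t : Λ, α • t = 0 → red t = 0 → t = 0)
    (hsurj : ∀ s : Dw, α • s = 0 → ∃ t : Λ, α • t = 0 ∧ red t = s)
    (x z : Λ) (hx : τ x = x) (hz : α • z = x) :
    (∃ y : Dw, σ y = y ∧ α • y = red x) ↔ τ z = z := by
  constructor
  · rintro ⟨y, hσy, hαy⟩
    obtain ⟨t, ht, hrt⟩ := hsurj (red z - y) (by
      rw [smul_sub, hαy, ← map_smul, hz, sub_self])
    have hτt := hτtors t ht
    -- z' = z - t has red z' = y
    have hred : red (z - t) = y := by rw [map_sub, hrt]; abel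
    have htors : α • (τ (z - t) - (z - t)) = 0 := by
      rw [smul_sub, ← map_smul, smul_sub, hz, map_sub, ht, map_zero, hx]
      abel
    have := hinj _ htors (by
      rw [map_sub, hcomm, hred, hσy, sub_self])
    have hz' : τ (z - t) = z - t := by
      have := sub_eq_zero.mp this; exact this
    have : τ z - τ t = z - t := by rwa [map_sub] at hz'
    rw [hτt] at this
    exact sub_left_injective this
  · intro hτz
    refine ⟨red z, ?_, ?_⟩
    · rw [← hcomm, hτz]
    · rw [← map_smul, hz]
end

section
/- Let A be an abelian variety over a number field F with commutative endomorphism ring O = End_F(A). Let a be an ideal of O and α, β ∈ O with β a ⊆ α O, and let x ∈ A(F). Let w be a finite place of F_α = F(A[α]), prime to α, at which A has good reduction, and x/α a fixed α-th root of x. If Frob_w(β·(x/α)) ≠ β·(x/α) (i.e., β · λ_α^{O·x}(Frob_w) ≠ 0 in A[α]), then red_w(x) ∉ a A(k_w). -/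
/-- (Lemma on non-divisibility of reductions.)  Abstract model as in
Statement 13, with `O = End_F A` now commutative: `Λ = A(F_α(x/α))`,
`Dw = A(k_{w'})`, `red` the reduction map, `τ`/`σ` the Frobenius on `Λ`/`Dw`, and
`A(k_w) = ker (σ - id)` the fixed subgroup of `σ`.  Let `a` be an ideal of `O` and
`α, β ∈ O` with `β a ⊆ α O`.  Given `x ∈ A(F)` (so `τ x = x`) and an `α`-th root
`z = x/α ∈ Λ`: if `β • (τ z - z) ≠ 0` (i.e. `β · λ_α^{O·x}(Frob_w) ≠ 0` in `A[α]`),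
then `red x ∉ a A(k_w)`. -/
theorem stmt14
    (O : Type) [CommRing O]
    (Λ Dw : Type) [AddCommGroup Λ] [Module O Λ] [AddCommGroup Dw] [Module O Dw]
    (a : Ideal O) (α β : O)
    (hβa : ∀ r ∈ a, β * r ∈ Ideal.span {α})
    (red : Λ →ₗ[O] Dw) (τ : Λ →ₗ[O] Λ) (σ : Dw →ₗ[O] Dw)
    (hcomm : ∀ u : Λ, red (τ u) = σ (red u))
    (hτtors : ∀ t : Λ, α • t = 0 → τ t = t)
    (hinj : ∀ t : Λ, α • t = 0 → red t = 0 → t = 0)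
    (hsurj : ∀ s : Dw, α • s = 0 → ∃ t : Λ, α • t = 0 ∧ red t = s)
    (x z : Λ) (hx : τ x = x) (hz : α • z = x)
    (hβz : β • (τ z - z) ≠ 0) :
    red x ∉ a • (LinearMap.ker (σ - LinearMap.id)) := by
  intro hmem
  -- Step 1: β • red x = α • s for some s fixed by σ
  have key : ∃ s : Dw, σ s = s ∧ β • red x = α • s := by
    refine Submodule.smul_induction_on hmem ?_ ?_
    · intro r hr n hn
      obtain ⟨c, hc⟩ := Ideal.mem_span_singleton'.mp (hβa r hr)
      refine ⟨c • n, ?_, ?_⟩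
      · have hn' : σ n = n := by
          have := hn
          simp only [LinearMap.mem_ker, LinearMap.sub_apply, LinearMap.id_apply,
            sub_eq_zero] at this
          exact this
        rw [map_smul, hn']
      · rw [smul_smul, ← hc, mul_comm, mul_smul]
    · rintro d1 d2 ⟨s1, hs1, h1⟩ ⟨s2, hs2, h2⟩
      exact ⟨s1 + s2, by rw [map_add, hs1, hs2], by rw [smul_add, h1, h2, smul_add]⟩
  obtain ⟨s, hσs, hs⟩ := key
  set t : Λ := β • z with ht
  have hαt : α • t = β • x := by rw [ht, smul_comm, hz]
  -- red t - s is α-torsion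
  have h1 : α • (red t - s) = 0 := by
    rw [smul_sub, ← map_smul, hαt, map_smul, hs, sub_self]
  obtain ⟨v, hv1, hv2⟩ := hsurj _ h1
  have hσv : σ (red v) = red v := by rw [← hcomm, hτtors v hv1]
  -- so σ (red t) = red t
  have h2 : σ (red t) = red t := by
    have : red t = red v + s := by rw [hv2]; abel
    rw [this, map_add, hσv, hσs]
  set u : Λ := τ t - t with hu
  have hαu : α • u = 0 := by
    rw [hu, smul_sub, ← map_smul, hαt, map_smul, hx, sub_self]
  have hredu : red u = 0 := by
    rw [hu, map_sub, hcomm, h2, sub_self]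
  have : u = 0 := hinj u hαu hredu
  apply hβz
  rw [← this, hu, ht, smul_sub, map_smul]
end

section
/- Let O be a commutative, reduced, finite, flat Z-algebra and N a finitely generated O-module. Then N admits an O-pre-basis: there exist y_1, ..., y_r ∈ N, none of which is Z-torsion, such that the natural map (O·y_1) ⊕ ⋯ ⊕ (O·y_r) → N has finite cokernel. (If N is finite, the empty family qualifies.) -/
/-- Let `O` be a commutative, reduced, finite, flat ℤ-algebra and `N`
a finitely generated `O`-module.  Then `N` admits an `O`-pre-basis: there are
`y 1, …, y r ∈ N`, none of which is ℤ-torsion, such that the natural map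
`(O·y 1) ⊕ ⋯ ⊕ (O·y r) → N` has finite cokernel, i.e. the submodule
`O·y 1 + ⋯ + O·y r` has finite index in `N`.  (If `N` is finite, the empty family
`r = 0` qualifies.) -/
theorem stmt18
    (O : Type) [CommRing O] [IsReduced O] [Module.Finite ℤ O] [Module.Flat ℤ O]
    (N : Type) [AddCommGroup N] [Module O N] [Module.Finite O N] :
    ∃ (r : ℕ) (y : Fin r → N),
      (∀ i, ∀ k : ℤ, k ≠ 0 → k • y i ≠ 0) ∧
      Finite (N ⧸ (⨆ i, Submodule.span O {y i} : Submodule O N)) := by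
  classical
  haveI : Module.Finite ℤ N := Module.Finite.trans O N
  obtain ⟨s, hs⟩ := Module.Finite.fg_top (R := ℤ) (M := N)
  set t := s.filter (fun x => ∀ k : ℤ, k ≠ 0 → k • x ≠ 0) with ht
  obtain ⟨e⟩ : Nonempty (Fin t.card ≃ t) := ⟨(Finset.equivFin t).symm⟩
  refine ⟨t.card, fun i => (e i : N), ?_, ?_⟩
  · intro i k hk
    exact (Finset.mem_filter.mp (e i).2).2 k hk
  · set S : Submodule O N := ⨆ i, Submodule.span O {((e i : N))} with hS
    have hmk : ∀ (k : ℤ) (x : N), S.mkQ (k • x) = k • S.mkQ x := fun k x =>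
      S.mkQ.map_smul_of_tower k x
    have hSt : S = Submodule.span O (t : Set N) := by
      rw [hS]
      apply le_antisymm
      · exact iSup_le fun i => Submodule.span_mono (Set.singleton_subset_iff.mpr (e i).2)
      · rw [Submodule.span_le]
        intro x hx
        exact le_iSup (fun i => Submodule.span O {((e i : N))}) (e.symm ⟨x, hx⟩)
          (by simp [Submodule.mem_span_singleton_self])
    haveI : Module.Finite ℤ (N ⧸ S) := Module.Finite.trans O _
    have htor : Module.IsTorsion ℤ (N ⧸ S) := by
      intro x
      obtain ⟨n, rfl⟩ := S.mkQ_surjective x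
      have hn : n ∈ (⊤ : Submodule ℤ N) := trivial
      rw [← hs] at hn
      induction hn using Submodule.span_induction with
      | mem z hz =>
        by_cases hzt : ∀ k : ℤ, k ≠ 0 → k • z ≠ 0
        · refine ⟨1, ?_⟩
          have hz0 : S.mkQ z = 0 := by
            rw [Submodule.mkQ_apply, Submodule.Quotient.mk_eq_zero]
            exact hSt ▸ Submodule.subset_span
              (Finset.mem_filter.mpr ⟨hz, hzt⟩)
          rw [hz0, smul_zero]
        · push_neg at hzt
          obtain ⟨k, hk0, hkz⟩ := hzt
          refine ⟨⟨k, mem_nonZeroDivisors_of_ne_zero hk0⟩, ?_⟩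
          show k • S.mkQ z = 0
          rw [← hmk, hkz, map_zero]
      | zero => exact ⟨1, by simp⟩
      | add a b _ _ ha hb =>
        obtain ⟨ka, hka⟩ := ha
        obtain ⟨kb, hkb⟩ := hb
        have hka' : (ka : ℤ) • S.mkQ a = 0 := hka
        have hkb' : (kb : ℤ) • S.mkQ b = 0 := hkb
        refine ⟨ka * kb, ?_⟩
        show ((ka : ℤ) * (kb : ℤ)) • S.mkQ (a + b) = 0
        have key : ((ka : ℤ) * (kb : ℤ)) • S.mkQ (a + b)
            = (kb : ℤ) • ((ka : ℤ) • S.mkQ a) + (ka : ℤ) • ((kb : ℤ) • S.mkQ b) := by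
          rw [map_add]
          module
        rw [key, hka', hkb', smul_zero, smul_zero, add_zero]
      | smul c m _ hm =>
        obtain ⟨k, hk⟩ := hm
        have hk' : (k : ℤ) • S.mkQ m = 0 := hk
        refine ⟨k, ?_⟩
        show (k : ℤ) • S.mkQ (c • m) = 0
        rw [hmk, smul_comm, hk', smul_zero]
    exact Module.finite_of_fg_torsion _ htor
end
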